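/- arXiv:1704.04944 — 4 statements merged into one kernel-verified Lean document; each statement's English description precedes it below -/
import Mathlib

section
/- Let h : ℝ → ℝ be a differentiable function defined on all of ℝ satisfying h'(t) ≤ k - h(t)² for all t, where k > 0. Then |h(t)| ≤ √k for all t ∈ ℝ. -/
/-!
If `h t₀ < -√k`, then `h' ≤ k - h² < 0` at the level `-c := h t₀`, so `h` stays below `-c`
for all later times. There `h' ≤ -δ h²` with `δ = 1 - k / c² > 0`, i.e. `(1 / h)' ≥ δ`, so the
negative function `1 / h` would have to become positive in finite time. This gives `-√k ≤ h`.
The upper bound follows by applying the same argument to `t ↦ -h (-t)`, which satisfies the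
same Riccati inequality.
-/

open Set

theorem forall_ge_le_of_deriv_neg_of_eq {h : ℝ → ℝ} {a m : ℝ} (hdiff : Differentiable ℝ h)
    (hlevel : ∀ t ≥ a, h t = m → deriv h t < 0) (ha : h a ≤ m) : ∀ t ≥ a, h t ≤ m := by
  intro t ht
  refine image_le_of_deriv_right_lt_deriv_boundary (f' := deriv h) (B' := fun _ => 0)
    hdiff.continuous.continuousOn (fun x _ => (hdiff x).hasDerivAt.hasDerivWithinAt) ha
    (fun _ => hasDerivAt_const _ _) (fun x hx => hlevel x hx.1) ⟨ht, le_rfl⟩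

theorem exists_nonneg_of_deriv_le_neg_mul_sq {h : ℝ → ℝ} {a δ : ℝ} (hδ : 0 < δ)
    (hdiff : Differentiable ℝ h) (hineq : ∀ t ≥ a, deriv h t ≤ -δ * h t ^ 2) :
    ∃ t ≥ a, 0 ≤ h t := by
  by_contra! hneg
  have hderiv : ∀ t ≥ a, HasDerivAt (fun t => (h t)⁻¹) (-deriv h t / h t ^ 2) t :=
    fun t ht => (hdiff t).hasDerivAt.inv (hneg t ht).ne
  have hgrowth := (convex_Ici a).mul_sub_le_image_sub_of_le_deriv
    (fun t ht => (hderiv t ht).continuousAt.continuousWithinAt)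
    (fun t ht => (hderiv t (interior_subset ht)).differentiableAt.differentiableWithinAt)
    (C := δ) (fun t ht => by
      have ht : a ≤ t := interior_subset ht
      rw [(hderiv t ht).deriv, le_div_iff₀ (by nlinarith [hneg t ht])]
      linarith [hineq t ht])
  have hinv_a : (h a)⁻¹ < 0 := inv_lt_zero.2 (hneg a le_rfl)
  -- the time at which the lower bound `(h a)⁻¹ + δ (t - a)` for `(h t)⁻¹` reaches `0`
  set T := a - (h a)⁻¹ / δ
  have hT : a ≤ T := by
    have hstep : (h a)⁻¹ / δ ≤ 0 := div_nonpos_of_nonpos_of_nonneg hinv_a.le hδ.le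
    linarith
  have hinv_T : (h T)⁻¹ < 0 := inv_lt_zero.2 (hneg T hT)
  have hgrowth_T := hgrowth a self_mem_Ici T hT hT
  have hgain : δ * (T - a) = -(h a)⁻¹ := by simp only [T]; field_simp; ring
  linarith

theorem neg_sqrt_le_of_deriv_le_sub_sq {h : ℝ → ℝ} {k : ℝ} (hk : 0 ≤ k)
    (hdiff : Differentiable ℝ h) (hineq : ∀ t, deriv h t ≤ k - h t ^ 2) (t₀ : ℝ) :
    -Real.sqrt k ≤ h t₀ := by
  by_contra! hlt
  set c := -h t₀
  have hc_sq : k < c ^ 2 := by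
    nlinarith [Real.sqrt_nonneg k, Real.sq_sqrt hk]
  have hc : 0 < c := by linarith [Real.sqrt_nonneg k]
  have hbelow : ∀ t ≥ t₀, h t ≤ -c :=
    forall_ge_le_of_deriv_neg_of_eq hdiff
      (fun t _ hteq => by linarith [hineq t, hteq ▸ neg_sq c]) (by simp [c])
  have hblowup : ∀ t ≥ t₀, deriv h t ≤ -(1 - k / c ^ 2) * h t ^ 2 := by
    intro t ht
    have hsq : c ^ 2 ≤ h t ^ 2 := by nlinarith [hbelow t ht]
    have hk_le : k ≤ k / c ^ 2 * h t ^ 2 := by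
      rw [div_mul_eq_mul_div, le_div_iff₀ (by positivity)]
      exact mul_le_mul_of_nonneg_left hsq hk
    linarith [hineq t]
  obtain ⟨t, ht, hnonneg⟩ := exists_nonneg_of_deriv_le_neg_mul_sq
    (by rw [sub_pos, div_lt_one (by positivity)]; exact hc_sq) hdiff hblowup
  linarith [hbelow t ht]

theorem differentiable_neg_comp_neg {h : ℝ → ℝ} (hdiff : Differentiable ℝ h) :
    Differentiable ℝ (fun t => -h (-t)) :=
  (hdiff.comp differentiable_neg).neg

theorem deriv_neg_comp_neg (h : ℝ → ℝ) (t : ℝ) :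
    deriv (fun t => -h (-t)) t = deriv h (-t) := by
  rw [deriv.fun_neg, deriv_comp_neg, neg_neg]

/-- Riccati comparison: a globally defined differentiable function `h : ℝ → ℝ`
satisfying `h'(t) ≤ k - h(t)^2` with `k > 0` is bounded by `√k` in absolute value. -/
theorem riccati_global_bound (k : ℝ) (hk : 0 < k) (h : ℝ → ℝ)
    (hdiff : Differentiable ℝ h)
    (hineq : ∀ t : ℝ, deriv h t ≤ k - (h t) ^ 2) :
    ∀ t : ℝ, |h t| ≤ Real.sqrt k := by
  intro t
  have hineq_refl : ∀ s, deriv (fun t => -h (-t)) s ≤ k - (-h (-s)) ^ 2 := fun s => by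
    rw [deriv_neg_comp_neg, neg_sq]
    exact hineq (-s)
  have hupper := neg_sqrt_le_of_deriv_le_sub_sq hk.le (differentiable_neg_comp_neg hdiff)
    hineq_refl (-t)
  rw [neg_neg] at hupper
  exact abs_le.2 ⟨neg_sqrt_le_of_deriv_le_sub_sq hk.le hdiff hineq t, by linarith⟩
end

section
/- Every maximal solution s of the ODE s''(t) = √k·((s'(t))² − 1) with k > 0 and initial condition s'(t₀) > 1 has the form s(t) = -(1/√k)·log|C₁·e^{2√k t} − 1| + t + C₂ with C₁ > 0, and is defined only on an interval bounded above by (1/(2√k))·log(1/C₁), with s(t) → ∞ as t approaches this endpoint from below. -/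
/-!
Where `s' > 1` the ODE forces `s''` to be nonzero, so `s'` is differentiable there, and
`q = (s' - 1)/(s' + 1)` solves `q' = 2√k q`; hence `q = C₁ e^{2√k t}` on the component `U` of
`{s' > 1}` containing `t₀`, and integrating `s' = (1 + q)/(1 - q)` gives the explicit formula,
which blows up at `T = log (1/C₁)/(2√k)`. A boundary point `b ∈ I` of `U` cannot exist: at `b`
either `s` or `s'` is continuous (if `s'(b) = 0` then `s''(b) = -√k ≠ 0`), so `b = T` is
impossible because both blow up there, and for `b < T` the formula extends to `b` with
`s'(b) > 1`. As `I` is connected, `I ⊆ U`.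
-/

open Real Set Filter Topology

noncomputable section

def blowupSol (a C t : ℝ) : ℝ := -(1 / a) * log |C * exp (2 * a * t) - 1| + t

def blowupSpeed (a C t : ℝ) : ℝ := (1 + C * exp (2 * a * t)) / (1 - C * exp (2 * a * t))

def blowupTime (a C : ℝ) : ℝ := 1 / (2 * a) * log (1 / C)

end

section ExplicitSolution

variable {a C t : ℝ}

theorem blowupSol_eq (a C t : ℝ) :
    blowupSol a C t = -(1 / a) * log (1 - C * exp (2 * a * t)) + t := by
  rw [blowupSol, log_abs, ← log_neg_eq_log, neg_sub]

theorem mul_exp_lt_one_iff_lt_blowupTime (ha : 0 < a) (hC : 0 < C) :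
    C * exp (2 * a * t) < 1 ↔ t < blowupTime a C := by
  calc C * exp (2 * a * t) < 1 ↔ exp (2 * a * t) < 1 / C := by rw [lt_div_iff₀' hC]
    _ ↔ 2 * a * t < log (1 / C) := (lt_log_iff_exp_lt (by positivity)).symm
    _ ↔ t < blowupTime a C := by
      rw [blowupTime, one_div_mul_eq_div, lt_div_iff₀' (by positivity)]

theorem one_lt_blowupSpeed (hC : 0 < C) (h : C * exp (2 * a * t) < 1) :
    1 < blowupSpeed a C t := by
  have : 0 < C * exp (2 * a * t) := by positivity
  rw [blowupSpeed, one_lt_div (by linarith)]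
  linarith

theorem continuousAt_blowupSpeed (h : C * exp (2 * a * t) < 1) :
    ContinuousAt (blowupSpeed a C) t := by
  unfold blowupSpeed
  exact ContinuousAt.div (by fun_prop) (by fun_prop) (by linarith)

theorem hasDerivAt_blowupSol (ha : a ≠ 0) (h : C * exp (2 * a * t) < 1) :
    HasDerivAt (blowupSol a C) (blowupSpeed a C t) t := by
  have hE : HasDerivAt (fun t => 1 - C * exp (2 * a * t))
      (-(2 * a * (C * exp (2 * a * t)))) t := by
    refine ((((hasDerivAt_id' t).const_mul (2 * a)).exp.const_mul C).const_sub 1).congr_deriv ?_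
    ring
  have hE1 : 1 - C * exp (2 * a * t) ≠ 0 := by linarith
  rw [funext (blowupSol_eq a C)]
  refine (((hE.log hE1).const_mul (-(1 / a))).add (hasDerivAt_id' t)).congr_deriv ?_
  rw [blowupSpeed]
  generalize C * exp (2 * a * t) = E at hE1 ⊢
  field_simp
  ring

theorem tendsto_one_sub_mul_exp_nhdsLT_blowupTime (ha : 0 < a) (hC : 0 < C) :
    Tendsto (fun t => 1 - C * exp (2 * a * t)) (𝓝[<] blowupTime a C) (𝓝[>] 0) := by
  have hT : C * exp (2 * a * blowupTime a C) = 1 := by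
    rw [blowupTime, ← mul_assoc, mul_one_div_cancel (by positivity), one_mul,
      exp_log (by positivity), mul_one_div_cancel hC.ne']
  refine tendsto_nhdsWithin_of_tendsto_nhds_of_eventually_within _ ?_ ?_
  · have : Tendsto (fun t => 1 - C * exp (2 * a * t)) (𝓝 (blowupTime a C)) (𝓝 0) := by
      rw [← sub_eq_zero.mpr hT.symm]
      exact Continuous.tendsto (by fun_prop) _
    exact this.mono_left nhdsWithin_le_nhds
  · filter_upwards [self_mem_nhdsWithin] with t ht
    exact sub_pos.mpr ((mul_exp_lt_one_iff_lt_blowupTime ha hC).mpr ht)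

theorem tendsto_blowupSol_nhdsLT_blowupTime (ha : 0 < a) (hC : 0 < C) :
    Tendsto (blowupSol a C) (𝓝[<] blowupTime a C) atTop := by
  rw [funext (blowupSol_eq a C)]
  refine Tendsto.atTop_add ?_ (tendsto_id.mono_left nhdsWithin_le_nhds)
  exact Tendsto.const_mul_atBot_of_neg (by simpa using ha)
    (tendsto_log_nhdsGT_zero.comp (tendsto_one_sub_mul_exp_nhdsLT_blowupTime ha hC))

theorem tendsto_blowupSpeed_nhdsLT_blowupTime (ha : 0 < a) (hC : 0 < C) :
    Tendsto (blowupSpeed a C) (𝓝[<] blowupTime a C) atTop := by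
  have hnum : Tendsto (fun t => 1 + C * exp (2 * a * t)) (𝓝[<] blowupTime a C) (𝓝 2) := by
    have := (tendsto_one_sub_mul_exp_nhdsLT_blowupTime ha hC).mono_right nhdsWithin_le_nhds
    convert (tendsto_const_nhds (x := (2 : ℝ))).sub this using 2 <;> ring
  exact hnum.pos_mul_atTop two_pos
    (tendsto_inv_nhdsGT_zero.comp (tendsto_one_sub_mul_exp_nhdsLT_blowupTime ha hC))

end ExplicitSolution

theorem HasDerivAt.eq_of_eqOn_convex {F : Type*} [NormedAddCommGroup F] [NormedSpace ℝ F]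
    {f g : ℝ → F} {f' g' : F} {U : Set ℝ} {b : ℝ} (hU : Convex ℝ U)
    (hU' : (interior U).Nonempty) (hb : b ∈ closure U) (hf : HasDerivAt f f' b)
    (hg : HasDerivAt g g' b) (hfg : EqOn f g U) : f' = g' := by
  have := mem_closure_iff_nhdsWithin_neBot.mp hb
  have hfgb : f b = g b :=
    tendsto_nhds_unique (hf.continuousAt.continuousWithinAt (s := U))
      ((hg.continuousAt.continuousWithinAt (s := U)).congr'
        (eventuallyEq_nhdsWithin_of_eqOn hfg).symm)
  exact (uniqueDiffWithinAt_convex hU hU' hb).eq_deriv U hf.hasDerivWithinAt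
    (hg.hasDerivWithinAt.congr (fun x hx => hfg hx) hfgb)

section RiccatiODE

variable {a : ℝ} {s : ℝ → ℝ} {t : ℝ}

-- `deriv` is junk `0` off the differentiability points, so the ODE alone forces `s'` to be
-- differentiable wherever its right-hand side is nonzero.
theorem differentiableAt_or_differentiableAt_deriv (ha : a ≠ 0)
    (hode : deriv (deriv s) t = a * (deriv s t ^ 2 - 1)) :
    DifferentiableAt ℝ s t ∨ DifferentiableAt ℝ (deriv s) t := by
  by_cases h : deriv s t = 0
  · refine .inr (differentiableAt_of_deriv_ne_zero ?_)
    simpa [hode, h] using ha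
  · exact .inl (differentiableAt_of_deriv_ne_zero h)

theorem hasDerivAt_deriv_of_one_lt_deriv (ha : a ≠ 0)
    (hode : deriv (deriv s) t = a * (deriv s t ^ 2 - 1)) (h : 1 < deriv s t) :
    HasDerivAt (deriv s) (a * (deriv s t ^ 2 - 1)) t := by
  have hne : deriv (deriv s) t ≠ 0 := by
    rw [hode]
    exact mul_ne_zero ha (by nlinarith)
  exact hode ▸ (differentiableAt_of_deriv_ne_zero hne).hasDerivAt

theorem isOpen_setOf_one_lt_deriv {I : Set ℝ} (ha : a ≠ 0) (hI : IsOpen I)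
    (hode : ∀ t ∈ I, deriv (deriv s) t = a * (deriv s t ^ 2 - 1)) :
    IsOpen {t ∈ I | 1 < deriv s t} := by
  refine isOpen_iff_mem_nhds.mpr fun t ⟨htI, ht⟩ => inter_mem (hI.mem_nhds htI) ?_
  exact (hasDerivAt_deriv_of_one_lt_deriv ha (hode t htI) ht).continuousAt.preimage_mem_nhds
    (Ioi_mem_nhds ht)

variable {U : Set ℝ}

theorem exists_deriv_eq_blowupSpeed (ha : a ≠ 0) (hU : IsOpen U) (hU' : IsPreconnected U)
    (hne : U.Nonempty) (hode : ∀ t ∈ U, deriv (deriv s) t = a * (deriv s t ^ 2 - 1))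
    (h1 : ∀ t ∈ U, 1 < deriv s t) :
    ∃ C > 0, ∀ t ∈ U, C * exp (2 * a * t) < 1 ∧ deriv s t = blowupSpeed a C t := by
  set g : ℝ → ℝ := fun t => (deriv s t - 1) / (deriv s t + 1) * exp (-(2 * a * t))
  have hg : ∀ t ∈ U, HasDerivAt g 0 t := by
    intro t ht
    have hv := hasDerivAt_deriv_of_one_lt_deriv ha (hode t ht) (h1 t ht)
    have hv1 : deriv s t + 1 ≠ 0 := by linarith [h1 t ht]
    refine (((hv.sub_const 1).div (hv.add_const 1) hv1).mul
      ((hasDerivAt_id' t).const_mul (2 * a)).neg.exp).congr_deriv ?_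
    simp only [Pi.div_apply, Pi.neg_apply]
    field_simp
    ring
  obtain ⟨C, hC⟩ := hU.exists_is_const_of_deriv_eq_zero hU'
    (fun t ht => (hg t ht).differentiableAt.differentiableWithinAt)
    (fun t ht => (hg t ht).deriv)
  obtain ⟨t₀, ht₀⟩ := hne
  have hCpos : 0 < C := by
    rw [← hC t₀ ht₀]
    have hv₀ := h1 t₀ ht₀
    exact mul_pos (div_pos (by linarith) (by linarith)) (exp_pos _)
  refine ⟨C, hCpos, fun t ht => ?_⟩
  have hq : (deriv s t - 1) / (deriv s t + 1) = C * exp (2 * a * t) := by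
    rw [← hC t ht, mul_assoc, ← exp_add, neg_add_cancel, exp_zero, mul_one]
  have hv1 := h1 t ht
  constructor
  · rw [← hq, div_lt_one (by linarith)]
    linarith
  · rw [blowupSpeed, ← hq]
    field_simp
    ring

theorem exists_eqOn_blowupSol_add (ha : a ≠ 0) (hU : IsOpen U) (hU' : IsPreconnected U)
    {C : ℝ} (h1 : ∀ t ∈ U, 1 < deriv s t)
    (hv : ∀ t ∈ U, C * exp (2 * a * t) < 1 ∧ deriv s t = blowupSpeed a C t) :
    ∃ C₂, EqOn s (fun t => blowupSol a C t + C₂) U :=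
  hU.exists_eq_add_of_deriv_eq hU'
    (fun t ht =>
      (differentiableAt_of_deriv_ne_zero (by linarith [h1 t ht])).differentiableWithinAt)
    (fun t ht => (hasDerivAt_blowupSol ha (hv t ht).1).differentiableAt.differentiableWithinAt)
    (fun t ht => by rw [(hasDerivAt_blowupSol ha (hv t ht).1).deriv, (hv t ht).2])

end RiccatiODE

section MaximalSolution

variable {a : ℝ} {s : ℝ → ℝ} {I : Set ℝ}

theorem exists_blowupSol_on_connectedComponentIn (ha : 0 < a) (hI : IsOpen I)
    (hode : ∀ t ∈ I, deriv (deriv s) t = a * (deriv s t ^ 2 - 1)) {t₀ : ℝ}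
    (ht₀ : t₀ ∈ I) (hs' : 1 < deriv s t₀) :
    ∃ C > 0, ∃ C₂, ∀ t ∈ connectedComponentIn {t ∈ I | 1 < deriv s t} t₀,
      t < blowupTime a C ∧ deriv s t = blowupSpeed a C t ∧ s t = blowupSol a C t + C₂ := by
  set U := connectedComponentIn {t ∈ I | 1 < deriv s t} t₀
  have hUo : IsOpen U := (isOpen_setOf_one_lt_deriv ha.ne' hI hode).connectedComponentIn
  have hUV : U ⊆ {t ∈ I | 1 < deriv s t} := connectedComponentIn_subset _ _
  have h1 : ∀ t ∈ U, 1 < deriv s t := fun t ht => (hUV ht).2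
  obtain ⟨C, hC, hv⟩ :=
    exists_deriv_eq_blowupSpeed ha.ne' hUo isPreconnected_connectedComponentIn
      ⟨t₀, mem_connectedComponentIn ⟨ht₀, hs'⟩⟩ (fun t ht => hode t (hUV ht).1) h1
  obtain ⟨C₂, hs⟩ :=
    exists_eqOn_blowupSol_add ha.ne' hUo isPreconnected_connectedComponentIn h1 hv
  exact ⟨C, hC, C₂, fun t ht =>
    ⟨(mul_exp_lt_one_iff_lt_blowupTime ha hC).mp (hv t ht).1, (hv t ht).2, hs ht⟩⟩

theorem closure_connectedComponentIn_setOf_one_lt_deriv_inter_subset (ha : 0 < a)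
    (hI : IsOpen I) (hode : ∀ t ∈ I, deriv (deriv s) t = a * (deriv s t ^ 2 - 1)) {t₀ : ℝ}
    (ht₀ : t₀ ∈ I) (hs' : 1 < deriv s t₀) :
    closure (connectedComponentIn {t ∈ I | 1 < deriv s t} t₀) ∩ I ⊆
      connectedComponentIn {t ∈ I | 1 < deriv s t} t₀ := by
  set V := {t ∈ I | 1 < deriv s t}
  set U := connectedComponentIn V t₀
  rintro b ⟨hbU, hbI⟩
  obtain ⟨C, hC, C₂, hsol⟩ := exists_blowupSol_on_connectedComponentIn ha hI hode ht₀ hs'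
  have : (𝓝[U] b).NeBot := mem_closure_iff_nhdsWithin_neBot.mp hbU
  have hUo : IsOpen U := (isOpen_setOf_one_lt_deriv ha.ne' hI hode).connectedComponentIn
  have hU₀ : t₀ ∈ U := mem_connectedComponentIn ⟨ht₀, hs'⟩
  have hUT : U ⊆ Iio (blowupTime a C) := fun t ht => (hsol t ht).1
  have hbT : b ≤ blowupTime a C := by
    simpa only [closure_Iio, mem_Iic] using closure_mono hUT hbU
  have hvU : deriv s =ᶠ[𝓝[U] b] blowupSpeed a C :=
    eventuallyEq_nhdsWithin_of_eqOn fun t ht => (hsol t ht).2.1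
  rcases hbT.lt_or_eq with hbT | rfl
  · have hEb : C * exp (2 * a * b) < 1 := (mul_exp_lt_one_iff_lt_blowupTime ha hC).mpr hbT
    have hvb : deriv s b = blowupSpeed a C b := by
      rcases differentiableAt_or_differentiableAt_deriv ha.ne' (hode b hbI) with hs | hv
      · refine HasDerivAt.eq_of_eqOn_convex isPreconnected_connectedComponentIn.convex
          (hUo.interior_eq ▸ ⟨t₀, hU₀⟩) hbU hs.hasDerivAt
          ((hasDerivAt_blowupSol ha.ne' hEb).add_const C₂) fun t ht => (hsol t ht).2.2
      · exact tendsto_nhds_unique (hv.continuousAt.continuousWithinAt (s := U))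
          ((continuousAt_blowupSpeed hEb).continuousWithinAt.congr' hvU.symm)
    have hbV : b ∈ V := ⟨hbI, hvb ▸ one_lt_blowupSpeed hC hEb⟩
    have hU' : IsPreconnected (insert b U) :=
      isPreconnected_connectedComponentIn.subset_closure (subset_insert b U)
        (insert_subset hbU subset_closure)
    exact hU'.subset_connectedComponentIn (mem_insert_of_mem b hU₀)
      (insert_subset hbV (connectedComponentIn_subset _ _)) (mem_insert b U)
  · exfalso
    have hle : 𝓝[U] blowupTime a C ≤ 𝓝[<] blowupTime a C := nhdsWithin_mono _ hUT
    rcases differentiableAt_or_differentiableAt_deriv ha.ne' (hode _ hbI) with hs | hv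
    · refine not_tendsto_atTop_of_tendsto_nhds (hs.continuousAt.continuousWithinAt (s := U)) ?_
      refine (((tendsto_blowupSol_nhdsLT_blowupTime ha hC).mono_left hle).atTop_add
        (tendsto_const_nhds (x := C₂))).congr' ?_
      exact (eventuallyEq_nhdsWithin_of_eqOn fun t ht => (hsol t ht).2.2).symm
    · exact not_tendsto_atTop_of_tendsto_nhds (hv.continuousAt.continuousWithinAt (s := U))
        (((tendsto_blowupSpeed_nhdsLT_blowupTime ha hC).mono_left hle).congr' hvU.symm)

end MaximalSolution

theorem timelike_ode_blowup_general (k : ℝ) (hk : 0 < k) (s : ℝ → ℝ) (I : Set ℝ)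
    (hIopen : IsOpen I) (hIconn : I.OrdConnected)
    (t₀ : ℝ) (ht₀ : t₀ ∈ I) (hs' : 1 < deriv s t₀)
    (hode : ∀ t ∈ I, deriv (deriv s) t = Real.sqrt k * ((deriv s t) ^ 2 - 1)) :
    ∃ C₁ C₂ : ℝ, 0 < C₁ ∧
      (∀ t ∈ I, s t = -(1 / Real.sqrt k) *
        Real.log |C₁ * Real.exp (2 * Real.sqrt k * t) - 1| + t + C₂) ∧
      I ⊆ Set.Iio (1 / (2 * Real.sqrt k) * Real.log (1 / C₁)) ∧
      Filter.Tendsto s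
        (nhdsWithin (1 / (2 * Real.sqrt k) * Real.log (1 / C₁)) I) Filter.atTop := by
  have ha : 0 < √k := sqrt_pos.mpr hk
  obtain ⟨C₁, hC₁, C₂, hsol⟩ :=
    exists_blowupSol_on_connectedComponentIn ha hIopen hode ht₀ hs'
  have hIU : I ⊆ connectedComponentIn {t ∈ I | 1 < deriv s t} t₀ :=
    hIconn.isPreconnected.subset_of_closure_inter_subset
      (isOpen_setOf_one_lt_deriv ha.ne' hIopen hode).connectedComponentIn
      ⟨t₀, ht₀, mem_connectedComponentIn ⟨ht₀, hs'⟩⟩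
      (closure_connectedComponentIn_setOf_one_lt_deriv_inter_subset ha hIopen hode ht₀ hs')
  have hsI : EqOn s (fun t => blowupSol √k C₁ t + C₂) I := fun t ht => (hsol t (hIU ht)).2.2
  have hIT : I ⊆ Iio (blowupTime √k C₁) := fun t ht => (hsol t (hIU ht)).1
  refine ⟨C₁, C₂, hC₁, hsI, hIT, ?_⟩
  have hlim := (tendsto_blowupSol_nhdsLT_blowupTime ha hC₁).mono_left (nhdsWithin_mono _ hIT)
  exact (hlim.atTop_add (tendsto_const_nhds (x := C₂))).congr'
    (eventuallyEq_nhdsWithin_of_eqOn hsI).symm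

/-- Every maximal solution of `s'' = √k ((s')² - 1)` with `k > 0` and `s'(t₀) > 1`
has the form `s(t) = -(1/√k)·log|C₁ e^{2√k t} - 1| + t + C₂` with `C₁ > 0`; its
(order-connected, open) maximal domain `I` is bounded above by
`(1/(2√k))·log(1/C₁)`, and `s(t) → ∞` as `t` approaches this endpoint from below. -/
theorem timelike_ode_blowup (k : ℝ) (hk : 0 < k) (s : ℝ → ℝ) (I : Set ℝ)
    (hIopen : IsOpen I) (hIconn : I.OrdConnected)
    (t₀ : ℝ) (ht₀ : t₀ ∈ I) (hs' : 1 < deriv s t₀)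
    (hode : ∀ t ∈ I, deriv (deriv s) t = Real.sqrt k * ((deriv s t) ^ 2 - 1))
    (hmax : ∀ (J : Set ℝ) (u : ℝ → ℝ), IsOpen J → J.OrdConnected → I ⊆ J →
      (∀ t ∈ J, deriv (deriv u) t = Real.sqrt k * ((deriv u t) ^ 2 - 1)) →
      Set.EqOn u s I → J = I) :
    ∃ C₁ C₂ : ℝ, 0 < C₁ ∧
      (∀ t ∈ I, s t = -(1 / Real.sqrt k) *
        Real.log |C₁ * Real.exp (2 * Real.sqrt k * t) - 1| + t + C₂) ∧
      I ⊆ Set.Iio (1 / (2 * Real.sqrt k) * Real.log (1 / C₁)) ∧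
      Filter.Tendsto s
        (nhdsWithin (1 / (2 * Real.sqrt k) * Real.log (1 / C₁)) I) Filter.atTop :=
  timelike_ode_blowup_general k hk s I hIopen hIconn t₀ ht₀ hs' hode
end

section
/- Let (Tˡ, g) be the flat l-torus with l ≥ 3 and α : Tˡ → ℝ smooth. If the conformally changed metric e^{2α}g has nonnegative scalar curvature, then 2Δα ≥ (l−2)|dα|² ≥ 0 on Tˡ (with respect to the flat metric), and consequently α is constant. -/
/-- The `i`-th partial derivative of a function on `ℝˡ` (model of the flat torus). -/
noncomputable def partialDeriv {l : ℕ} (i : Fin l) (f : (Fin l → ℝ) → ℝ)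
    (x : Fin l → ℝ) : ℝ :=
  fderiv ℝ f x (Pi.single i 1)

/-- The flat Laplacian (divergence of the gradient) on `ℝˡ`. -/
noncomputable def flatLaplacian {l : ℕ} (f : (Fin l → ℝ) → ℝ)
    (x : Fin l → ℝ) : ℝ :=
  ∑ i : Fin l, partialDeriv i (fun y => partialDeriv i f y) x

/-- The squared norm `|dα|²` of the differential, for the flat metric. -/
noncomputable def flatGradSq {l : ℕ} (f : (Fin l → ℝ) → ℝ)
    (x : Fin l → ℝ) : ℝ :=
  ∑ i : Fin l, (partialDeriv i f x) ^ 2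

open MeasureTheory Set

/-- Partial derivatives of a `C^∞` function are `C^∞`. -/
lemma pd_contDiff {l : ℕ} (i : Fin l) {f : (Fin l → ℝ) → ℝ} (hf : ContDiff ℝ (⊤ : ℕ∞) f) :
    ContDiff ℝ (⊤ : ℕ∞) (fun y => partialDeriv i f y) := by
  have h1 : ContDiff ℝ (⊤ : ℕ∞) (fderiv ℝ f) := hf.fderiv_right (by simp)
  exact (ContinuousLinearMap.apply ℝ ℝ (Pi.single i 1 : Fin l → ℝ)).contDiff.comp h1

/-- The derivative of a periodic (in direction `c`) function is periodic. -/
lemma fderiv_per {l : ℕ} {f : (Fin l → ℝ) → ℝ} (hf : Differentiable ℝ f)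
    (c : Fin l → ℝ) (h : ∀ x, f (x + c) = f x) (y : Fin l → ℝ) :
    fderiv ℝ f (y + c) = fderiv ℝ f y := by
  have ht : HasFDerivAt (fun z : Fin l → ℝ => z + c)
      (ContinuousLinearMap.id ℝ (Fin l → ℝ)) y := (hasFDerivAt_id y).add_const c
  have h1 : HasFDerivAt (fun z => f (z + c)) (fderiv ℝ f (y + c)) y := by
    have h0 := (hf (y + c)).hasFDerivAt.comp y ht
    simp only [ContinuousLinearMap.comp_id] at h0
    exact h0
  have h2 : HasFDerivAt f (fderiv ℝ f (y + c)) y := by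
    have : (fun z => f (z + c)) = f := funext h
    rwa [this] at h1
  exact h2.fderiv.symm ▸ rfl

lemma insertNth_add_single {n : ℕ} (i : Fin (n + 1)) (c : ℝ) (x : Fin n → ℝ) :
    Fin.insertNth i (c + 1) x = (Fin.insertNth i c x : Fin (n + 1) → ℝ) + Pi.single i 1 := by
  funext j
  rcases eq_or_ne j i with rfl | hj
  · simp
  · obtain ⟨k, rfl⟩ := Fin.exists_succAbove_eq hj
    simp [Fin.insertNth_apply_succAbove, Pi.single_eq_of_ne (Fin.succAbove_ne i k)]

/-- The integral of the flat Laplacian of a `ℤˡ`-periodic smooth function over a unit box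
vanishes (divergence theorem + periodicity of the gradient). -/
lemma integral_lap_zero {n : ℕ} {α : (Fin (n + 1) → ℝ) → ℝ} (hα : ContDiff ℝ (⊤ : ℕ∞) α)
    (hper : ∀ x i, α (x + Pi.single i 1) = α x) (a : Fin (n + 1) → ℝ) :
    ∫ x in Set.Icc a (a + 1), flatLaplacian α x = 0 := by
  have hdiff : Differentiable ℝ α := hα.differentiable (by simp)
  have hδc : ∀ i : Fin (n + 1), ContDiff ℝ (⊤ : ℕ∞) (fun y => partialDeriv i α y) :=
    fun i => pd_contDiff i hα
  have hle : a ≤ a + 1 := fun i => by simp [le_of_lt]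
  have hΔc : Continuous (fun x => flatLaplacian α x) := by
    unfold flatLaplacian
    exact continuous_finset_sum _ fun i _ => (pd_contDiff i (hδc i)).continuous
  have key := MeasureTheory.integral_divergence_of_hasFDerivAt_off_countable' a (a + 1)
    hle (fun i y => partialDeriv i α y) (fun i x => fderiv ℝ (fun y => partialDeriv i α y) x)
    ∅ Set.countable_empty
    (fun i => (hδc i).continuous.continuousOn)
    (fun x _ i => ((hδc i).differentiable (by simp) x).hasFDerivAt)
    (by
      have : (fun x => ∑ i, fderiv ℝ (fun y => partialDeriv i α y) x (Pi.single i 1))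
          = fun x => flatLaplacian α x := rfl
      rw [this]
      exact hΔc.integrableOn_Icc)
  have hL : (∫ x in Set.Icc a (a + 1),
      ∑ i, fderiv ℝ (fun y => partialDeriv i α y) x (Pi.single i 1))
      = ∫ x in Set.Icc a (a + 1), flatLaplacian α x := rfl
  rw [hL] at key
  rw [key]
  apply Finset.sum_eq_zero
  intro i _
  have hfaces : ∀ x : Fin n → ℝ,
      partialDeriv i α (Fin.insertNth i ((a + 1) i) x)
        = partialDeriv i α (Fin.insertNth i (a i) x) := by
    intro x
    have : (a + 1) i = a i + 1 := rfl
    rw [this, insertNth_add_single]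
    unfold partialDeriv
    rw [fderiv_per hdiff _ (fun z => hper z i) _]
  rw [sub_eq_zero]
  exact setIntegral_congr_fun measurableSet_Icc (fun x _ => hfaces x)

/-- For `l ≥ 3`: if the conformal metric `e^{2α} g` on the flat `l`-torus has
nonnegative scalar curvature
`e^{-2α}(2(l-1)Δα - (l-2)(l-1)|dα|²)` (the flat torus has `Sc_g = 0`), then
`2Δα ≥ (l-2)|dα|² ≥ 0` pointwise and `α` is constant. -/
theorem conformal_torus_high_dim_constant (l : ℕ) (hl : 3 ≤ l)
    (α : (Fin l → ℝ) → ℝ) (hα : ContDiff ℝ (⊤ : ℕ∞) α)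
    (hper : ∀ (x : Fin l → ℝ) (i : Fin l), α (x + Pi.single i 1) = α x)
    (hscal : ∀ x, 0 ≤ Real.exp (-(2 * α x)) *
      (2 * ((l : ℝ) - 1) * flatLaplacian α x
        - ((l : ℝ) - 2) * ((l : ℝ) - 1) * flatGradSq α x)) :
    (∀ x, ((l : ℝ) - 2) * flatGradSq α x ≤ 2 * flatLaplacian α x ∧
      0 ≤ ((l : ℝ) - 2) * flatGradSq α x) ∧
    ∀ x y, α x = α y := by
  have hL3 : (3 : ℝ) ≤ (l : ℝ) := by exact_mod_cast hl
  have hG : ∀ x, 0 ≤ flatGradSq α x := fun x =>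
    Finset.sum_nonneg fun i _ => sq_nonneg _
  -- pointwise inequality
  have hineq : ∀ x, ((l : ℝ) - 2) * flatGradSq α x ≤ 2 * flatLaplacian α x := by
    intro x
    have hB : 0 ≤ 2 * ((l : ℝ) - 1) * flatLaplacian α x
        - ((l : ℝ) - 2) * ((l : ℝ) - 1) * flatGradSq α x :=
      (mul_nonneg_iff_of_pos_left (Real.exp_pos _)).mp (hscal x)
    have h2 : 0 ≤ ((l : ℝ) - 1) * (2 * flatLaplacian α x
        - ((l : ℝ) - 2) * flatGradSq α x) := by linear_combination hB
    have h3 := (mul_nonneg_iff_of_pos_left (show (0:ℝ) < (l : ℝ) - 1 by linarith)).mp h2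
    linarith
  have hGnn : ∀ x, 0 ≤ ((l : ℝ) - 2) * flatGradSq α x := fun x =>
    mul_nonneg (by linarith) (hG x)
  have hΔnn : ∀ x, 0 ≤ flatLaplacian α x := fun x => by
    have := hineq x; have := hGnn x; linarith
  refine ⟨fun x => ⟨hineq x, hGnn x⟩, ?_⟩
  -- reduce to l = n + 1
  obtain ⟨n, rfl⟩ : ∃ n, l = n + 1 := ⟨l - 1, by omega⟩
  have hΔc : Continuous (fun x => flatLaplacian α x) := by
    unfold flatLaplacian
    exact continuous_finset_sum _ fun i _ =>
      (pd_contDiff i (pd_contDiff i hα)).continuous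
  -- the Laplacian vanishes identically
  have hΔ0 : ∀ x, flatLaplacian α x = 0 := by
    intro x₀
    by_contra h0
    have hpos : 0 < flatLaplacian α x₀ := lt_of_le_of_ne (hΔnn x₀) (Ne.symm h0)
    set a : Fin (n + 1) → ℝ := fun i => x₀ i - (1 / 2 : ℝ) with ha
    have hI0 : ∫ x in Set.Icc a (a + 1), flatLaplacian α x = 0 :=
      integral_lap_zero hα hper a
    have hint : IntegrableOn (fun x => flatLaplacian α x) (Set.Icc a (a + 1)) :=
      hΔc.integrableOn_Icc
    have hae : 0 ≤ᵐ[volume.restrict (Set.Icc a (a + 1))] fun x => flatLaplacian α x :=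
      Filter.Eventually.of_forall hΔnn
    -- positivity of the integral from continuity
    obtain ⟨r, hr, hball⟩ : ∃ r > 0, ∀ y ∈ Metric.ball x₀ r, 0 < flatLaplacian α y := by
      have : {y | 0 < flatLaplacian α y} ∈ nhds x₀ :=
        (hΔc.continuousAt (x := x₀)).preimage_mem_nhds (Ioi_mem_nhds hpos)
      obtain ⟨r, hr, hsub⟩ := Metric.mem_nhds_iff.mp this
      exact ⟨r, hr, fun y hy => hsub hy⟩
    set s : ℝ := min r (1 / 2) with hs
    have hspos : 0 < s := lt_min hr (by norm_num)
    have hsub : Metric.ball x₀ s ⊆ Set.Icc a (a + 1) := by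
      intro y hy
      have hd : dist y x₀ < 1 / 2 :=
        lt_of_lt_of_le (Metric.mem_ball.mp hy) (min_le_right _ _)
      have hco : ∀ i, |y i - x₀ i| < 1 / 2 := fun i => by
        have h1 := dist_le_pi_dist y x₀ i
        rw [Real.dist_eq] at h1
        linarith
      constructor <;> intro i
      · have := abs_lt.mp (hco i)
        simp only [ha]
        linarith [this.1]
      · have := abs_lt.mp (hco i)
        simp only [ha, Pi.add_apply, Pi.one_apply]
        linarith [this.2]
    have hsupp : Metric.ball x₀ s ⊆ Function.support (fun x => flatLaplacian α x)
        ∩ Set.Icc a (a + 1) := by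
      intro y hy
      refine ⟨?_, hsub hy⟩
      have : y ∈ Metric.ball x₀ r := Metric.ball_subset_ball (min_le_left _ _) hy
      exact ne_of_gt (hball y this)
    have hposvol : 0 < volume (Function.support (fun x => flatLaplacian α x)
        ∩ Set.Icc a (a + 1)) :=
      lt_of_lt_of_le (Metric.measure_ball_pos volume x₀ hspos) (measure_mono hsupp)
    have := (setIntegral_pos_iff_support_of_nonneg_ae hae hint).mpr hposvol
    linarith [hI0, this]
  -- hence the gradient vanishes
  have hgrad : ∀ x i, partialDeriv i α x = 0 := by
    intro x i
    have h1 : ((n + 1 : ℕ) : ℝ) - 2 > 0 := by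
      have : (3 : ℝ) ≤ ((n + 1 : ℕ) : ℝ) := hL3
      linarith
    have h2 : flatGradSq α x ≤ 0 := by
      have := hineq x
      rw [hΔ0 x] at this
      nlinarith [hG x]
    have h3 : flatGradSq α x = 0 := le_antisymm h2 (hG x)
    have h4 : (partialDeriv i α x) ^ 2 = 0 := by
      have hle : (partialDeriv i α x) ^ 2 ≤ flatGradSq α x :=
        Finset.single_le_sum (fun j _ => sq_nonneg (partialDeriv j α x))
          (Finset.mem_univ i)
      nlinarith [sq_nonneg (partialDeriv i α x)]
    exact pow_eq_zero_iff (by norm_num) |>.mp h4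
  -- so the full derivative vanishes and α is constant
  have hdiff : Differentiable ℝ α := hα.differentiable (by simp)
  have hfd : ∀ x, fderiv ℝ α x = 0 := by
    intro x
    ext v
    have hv : v = ∑ i : Fin (n + 1), Pi.single i (v i) := (Finset.univ_sum_single v).symm
    rw [ContinuousLinearMap.zero_apply]
    conv_lhs => rw [hv]
    rw [map_sum]
    apply Finset.sum_eq_zero
    intro i _
    have : Pi.single i (v i) = v i • (Pi.single i 1 : Fin (n + 1) → ℝ) := by
      rw [← Pi.single_smul, smul_eq_mul, mul_one]
    rw [this, _root_.map_smul]
    have := hgrad x i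
    unfold partialDeriv at this
    rw [this, smul_zero]
  exact fun x y => is_const_of_fderiv_eq_zero hdiff hfd x y
end

section
/- Let x, y, z ≥ 0 be real numbers, and let t, k satisfy (1+t)/8 < k, k < 1/(2(1+t)), k < (1−3t)/8, and (2(1+t) − 4k(1+t)²)·((1−3t)/2 − 4k) > (9/4)(1−t²)², with t > −1. If not all of x, y, z are zero and 4(1+t)²x² + 4y² − 4(1+t)z² > 0, then (2(1+t) − 4k(1+t)²)x² − 3|1−t²|xy + ((1−3t)/2 − 4k)y² + (4k(1+t) − (1+t)²/2)z² > 0. -/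
/-! The `xy`-part is a binary quadratic form with positive `y²`-coefficient and negative
discriminant (this is `h4`), hence positive definite; the constraint `hpos` rules out
`x = y = 0`, and the `z²`-coefficient `4 (1 + t) (k - (1 + t) / 8)` is positive. -/

lemma binary_quadratic_pos {p q r x y : ℝ} (hr : 0 < r) (hdisc : q ^ 2 < 4 * p * r)
    (hxy : x ≠ 0 ∨ y ≠ 0) : 0 < p * x ^ 2 - q * x * y + r * y ^ 2 := by
  rcases eq_or_ne x 0 with rfl | hx
  · have hy : y ≠ 0 := hxy.resolve_left (not_not.mpr rfl)
    have : 0 < r * y ^ 2 := by positivity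
    linarith
  · have hsq : 4 * r * (p * x ^ 2 - q * x * y + r * y ^ 2)
        = (2 * r * y - q * x) ^ 2 + (4 * p * r - q ^ 2) * x ^ 2 := by ring
    have : 0 < (4 * p * r - q ^ 2) * x ^ 2 := mul_pos (by linarith) (by positivity)
    have : 0 < 4 * r * (p * x ^ 2 - q * x * y + r * y ^ 2) := by
      rw [hsq]; nlinarith [sq_nonneg (2 * r * y - q * x)]
    exact pos_of_mul_pos_right this (by positivity)

theorem quadratic_form_positivity_general (t k x y z : ℝ) (ht : -1 < t)
    (h1 : (1 + t) / 8 < k) (h3 : k < (1 - 3 * t) / 8)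
    (h4 : (2 * (1 + t) - 4 * k * (1 + t) ^ 2) * ((1 - 3 * t) / 2 - 4 * k)
      > (9 / 4) * (1 - t ^ 2) ^ 2)
    (hpos : 4 * (1 + t) ^ 2 * x ^ 2 + 4 * y ^ 2 - 4 * (1 + t) * z ^ 2 > 0) :
    (2 * (1 + t) - 4 * k * (1 + t) ^ 2) * x ^ 2 - 3 * |1 - t ^ 2| * x * y
      + ((1 - 3 * t) / 2 - 4 * k) * y ^ 2
      + (4 * k * (1 + t) - (1 + t) ^ 2 / 2) * z ^ 2 > 0 := by
  have ht' : 0 < 1 + t := by linarith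
  have hxy : x ≠ 0 ∨ y ≠ 0 := by
    by_contra! h
    rw [h.1, h.2] at hpos
    nlinarith [mul_nonneg ht'.le (sq_nonneg z)]
  have hdisc : (3 * |1 - t ^ 2|) ^ 2
      < 4 * (2 * (1 + t) - 4 * k * (1 + t) ^ 2) * ((1 - 3 * t) / 2 - 4 * k) := by
    rw [mul_pow, sq_abs]; linarith
  have hxy_pos := binary_quadratic_pos (by linarith) hdisc hxy
  have hz_coeff : 0 ≤ (4 * k * (1 + t) - (1 + t) ^ 2 / 2) * z ^ 2 := by
    rw [show 4 * k * (1 + t) - (1 + t) ^ 2 / 2 = 4 * (1 + t) * (k - (1 + t) / 8) by ring]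
    exact mul_nonneg (mul_nonneg (by positivity) (by linarith)) (sq_nonneg z)
  linarith

/-- Key quadratic-form positivity estimate for the `SU(2,1)/S¹` example. -/
theorem quadratic_form_positivity (t k x y z : ℝ) (ht : -1 < t)
    (h1 : (1 + t) / 8 < k) (h2 : k < 1 / (2 * (1 + t))) (h3 : k < (1 - 3 * t) / 8)
    (h4 : (2 * (1 + t) - 4 * k * (1 + t) ^ 2) * ((1 - 3 * t) / 2 - 4 * k)
      > (9 / 4) * (1 - t ^ 2) ^ 2)
    (hx : 0 ≤ x) (hy : 0 ≤ y) (hz : 0 ≤ z)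
    (hne : ¬(x = 0 ∧ y = 0 ∧ z = 0))
    (hpos : 4 * (1 + t) ^ 2 * x ^ 2 + 4 * y ^ 2 - 4 * (1 + t) * z ^ 2 > 0) :
    (2 * (1 + t) - 4 * k * (1 + t) ^ 2) * x ^ 2 - 3 * |1 - t ^ 2| * x * y
      + ((1 - 3 * t) / 2 - 4 * k) * y ^ 2
      + (4 * k * (1 + t) - (1 + t) ^ 2 / 2) * z ^ 2 > 0 :=
  quadratic_form_positivity_general t k x y z ht h1 h3 h4 hpos
end
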